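/- For parameters satisfying assumption (ii) of the paper, V* := 6J − 2(λ+h) + 4J²/(λ+h) is strictly less than H(σ_c) + Δ^p − H(−1) = 2J(2l_c−1) − (λ+h)l_c(l_c−1) + (λ−h)(l_c(l_c−1)+2l_c−1) + 4J − (λ+h), where l_c = ⌊(2J+λ−h)/(2h)⌋+1. -/

import Mathlib

/-!
Write `c = l_c`, `s = λ + h` and let `G` be the right-hand side minus `6J − 2s`. Then
`2h (G s − 4J²) = s (2hc − (2J + λ − h)) (2J + λ + h − 2hc) + Q(J)` with `Q = gapQuadratic λ h`.
The first summand is positive since `(2J + λ − h)/(2h)` is not an integer, so it lies strictly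
between `c − 1` and `c`. The quadratic `Q` has leading coefficient `4(λ − h) > 0` and
`4(λ − h) Q(J) = (4J(λ − h) − 2s(2h − λ))² − 4δ` for an explicit `δ`. After clearing
denominators, the assumed upper bound on `λ` says `4J(λ − h) − 2s(2h − λ) > h s √D`, where
`D = radicand λ h`, and `h² s² D − 4δ = 2h(λ − h) s (17h − 7λ) > 0`; hence `Q(J) > 0`.
-/

noncomputable section

variable {J lam h : ℝ}

def radicand (lam h : ℝ) : ℝ :=
  64 / (1 + h / lam) - 22 / (h / lam) - 6

theorem mul_sqrt_radicand_lt_of_lam_lt (h0 : 0 < h) (hlam : 0 < lam) (hh1 : lam / 2 < h)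
    (hcond : lam <
      (4 * J * (1 - h / lam) / ((h / lam) * (1 + h / lam))) *
        (-(2 * (1 - 2 * (h / lam))) / (h / lam) +
          Real.sqrt (radicand lam h))⁻¹) :
    h * (lam + h) * Real.sqrt (radicand lam h) <
      4 * J * (lam - h) - 2 * (lam + h) * (2 * h - lam) := by
  set q := Real.sqrt (radicand lam h)
  have hB : 0 < -(2 * (1 - 2 * (h / lam))) / (h / lam) + q := by
    have hξ : -(2 * (1 - 2 * (h / lam))) / (h / lam) = 2 * (2 * h - lam) / h := by
      field_simp; ring
    have : 0 < 2 * h - lam := by linarith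
    rw [hξ]; positivity
  have key := (lt_mul_inv_iff₀ hB).1 hcond
  have eB : lam * (-(2 * (1 - 2 * (h / lam))) / (h / lam) + q) =
      lam * (2 * (lam + h) * (2 * h - lam) + h * (lam + h) * q) / (h * (lam + h)) := by
    field_simp; ring
  have eP : 4 * J * (1 - h / lam) / ((h / lam) * (1 + h / lam)) =
      lam * (4 * J * (lam - h)) / (h * (lam + h)) := by
    field_simp
  rw [eB, eP, div_lt_div_iff_of_pos_right (by positivity)] at key
  linarith [lt_of_mul_lt_mul_left key hlam.le]

theorem le_sq_mul_sqrt_radicand (h0 : 0 < h) (hlam : 0 < lam) :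
    h * (lam + h) * (64 * lam * h - 22 * lam * (lam + h) - 6 * h * (lam + h)) ≤
      (h * (lam + h) * Real.sqrt (radicand lam h)) ^ 2 := by
  rw [mul_pow, Real.sq_sqrt']
  calc _ = (h * (lam + h)) ^ 2 * radicand lam h := by
        unfold radicand; field_simp
    _ ≤ _ := by gcongr; exact le_max_left _ _

def gapQuadratic (lam h J : ℝ) : ℝ :=
  4 * (lam - h) * J ^ 2 - 4 * (lam + h) * (2 * h - lam) * J +
    (lam + h) * ((lam - h) ^ 2 + 2 * h * (lam + h))

theorem gapQuadratic_pos {m : ℝ} (hh1 : lam / 2 < h) (hh2 : h < lam) (hm0 : 0 ≤ m)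
    (hm : h * (lam + h) * (64 * lam * h - 22 * lam * (lam + h) - 6 * h * (lam + h)) ≤ m ^ 2)
    (hJ : m < 4 * J * (lam - h) - 2 * (lam + h) * (2 * h - lam)) :
    0 < gapQuadratic lam h J := by
  have ha : 0 < lam - h := by linarith
  have hdisc : 4 * ((lam + h) ^ 2 * (2 * h - lam) ^ 2 -
      (lam - h) * (lam + h) * ((lam - h) ^ 2 + 2 * h * (lam + h))) <
      h * (lam + h) * (64 * lam * h - 22 * lam * (lam + h) - 6 * h * (lam + h)) := by
    have : 0 < 2 * h * (lam - h) * (lam + h) * (17 * h - 7 * lam) := by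
      have : 0 < h := by linarith
      have : 0 < lam + h := by linarith
      exact mul_pos (by positivity) (by linarith)
    linarith
  have hsq : m ^ 2 < (4 * J * (lam - h) - 2 * (lam + h) * (2 * h - lam)) ^ 2 :=
    pow_lt_pow_left₀ hJ hm0 two_ne_zero
  have : 0 < 4 * (lam - h) * gapQuadratic lam h J := by
    unfold gapQuadratic; nlinarith
  exact pos_of_mul_pos_right this (by linarith)

theorem Vstar_lt_of_gapQuadratic_pos {c : ℝ} (h0 : 0 < h) (hs : 0 < lam + h)
    (hc_gt : (2 * J + lam - h) / (2 * h) < c) (hc_lt : c < (2 * J + lam - h) / (2 * h) + 1)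
    (hQ : 0 < gapQuadratic lam h J) :
    6 * J - 2 * (lam + h) + 4 * J ^ 2 / (lam + h) <
      2 * J * (2 * c - 1) - (lam + h) * (c * (c - 1)) +
        (lam - h) * (c * (c - 1) + 2 * c - 1) + 4 * J - (lam + h) := by
  have hc1 : 2 * J + lam - h < 2 * h * c := by
    rwa [div_lt_iff₀' (by positivity)] at hc_gt
  have hc2 : 2 * h * c < 2 * J + lam + h := by
    rw [← sub_lt_iff_lt_add, lt_div_iff₀' (by positivity)] at hc_lt
    linarith
  set gap := 2 * J * (2 * c - 1) - (lam + h) * (c * (c - 1)) +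
    (lam - h) * (c * (c - 1) + 2 * c - 1) + 4 * J - (lam + h) - (6 * J - 2 * (lam + h))
  have key : 2 * h * (gap * (lam + h) - 4 * J ^ 2) =
      (lam + h) * ((2 * h * c - (2 * J + lam - h)) * ((2 * J + lam + h) - 2 * h * c)) +
        gapQuadratic lam h J := by
    unfold gap gapQuadratic; ring
  have hfloor :
      0 < (lam + h) * ((2 * h * c - (2 * J + lam - h)) * ((2 * J + lam + h) - 2 * h * c)) :=
    mul_pos hs (mul_pos (by linarith) (by linarith))
  have : 0 < gap * (lam + h) - 4 * J ^ 2 :=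
    pos_of_mul_pos_right (key ▸ add_pos hfloor hQ) (by linarith)
  linarith [(div_lt_iff₀ hs).2 (by linarith : 4 * J ^ 2 < gap * (lam + h))]
end

theorem Vstar_lt_lower_bound_general (J lam h : ℝ) (hlam : 0 < lam)
    (hh1 : lam / 2 < h) (hh2 : h < lam)
    (hni1 : ¬ ∃ k : ℤ, (2 * J + lam - h) / (2 * h) = (k : ℝ))
    (hcond : lam <
      (4 * J * (1 - h / lam) / ((h / lam) * (1 + h / lam))) *
        (-(2 * (1 - 2 * (h / lam))) / (h / lam) +
          Real.sqrt (64 / (1 + h / lam) - 22 / (h / lam) - 6))⁻¹) :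
    6 * J - 2 * (lam + h) + 4 * J ^ 2 / (lam + h) <
      2 * J * (2 * ((⌊(2 * J + lam - h) / (2 * h)⌋ : ℝ) + 1) - 1) -
        (lam + h) * (((⌊(2 * J + lam - h) / (2 * h)⌋ : ℝ) + 1) *
          (((⌊(2 * J + lam - h) / (2 * h)⌋ : ℝ) + 1) - 1)) +
        (lam - h) * (((⌊(2 * J + lam - h) / (2 * h)⌋ : ℝ) + 1) *
            (((⌊(2 * J + lam - h) / (2 * h)⌋ : ℝ) + 1) - 1) +
          2 * ((⌊(2 * J + lam - h) / (2 * h)⌋ : ℝ) + 1) - 1) +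
        4 * J - (lam + h) := by
  have h0 : 0 < h := by linarith
  have hQ : 0 < gapQuadratic lam h J :=
    gapQuadratic_pos hh1 hh2 (by positivity) (le_sq_mul_sqrt_radicand h0 hlam)
      (mul_sqrt_radicand_lt_of_lam_lt h0 hlam hh1 hcond)
  have hfloor : (⌊(2 * J + lam - h) / (2 * h)⌋ : ℝ) < (2 * J + lam - h) / (2 * h) :=
    Int.floor_lt_self_iff.2 fun ⟨k, hk⟩ => hni1 ⟨k, hk.symm⟩
  exact Vstar_lt_of_gapQuadratic_pos h0 (by linarith) (Int.lt_floor_add_one _)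
    (by linarith) hQ

/-- Under assumption (ii) of the paper, V* = 6J − 2(λ+h) + 4J²/(λ+h) is
strictly smaller than H(σ_c) + Δ^p − H(−1), where
l_c = ⌊(2J+λ−h)/(2h)⌋+1 and Δ^p = 4J−(λ+h). -/
theorem Vstar_lt_lower_bound (J lam h : ℝ) (hJ : 0 < J) (hlam : 0 < lam)
    (hh1 : lam / 2 < h) (hh2 : h < lam) (hh3 : h < J / 3 - lam)
    (hni1 : ¬ ∃ k : ℤ, (2 * J + lam - h) / (2 * h) = (k : ℝ))
    (hni2 : ¬ ∃ k : ℤ, 2 * J / (lam + h) = (k : ℝ))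
    (hxi : (9 - 4 * Real.sqrt 3) / 3 < h / lam)
    (hcond : lam <
      (4 * J * (1 - h / lam) / ((h / lam) * (1 + h / lam))) *
        (-(2 * (1 - 2 * (h / lam))) / (h / lam) +
          Real.sqrt (64 / (1 + h / lam) - 22 / (h / lam) - 6))⁻¹) :
    6 * J - 2 * (lam + h) + 4 * J ^ 2 / (lam + h) <
      2 * J * (2 * ((⌊(2 * J + lam - h) / (2 * h)⌋ : ℝ) + 1) - 1) -
        (lam + h) * (((⌊(2 * J + lam - h) / (2 * h)⌋ : ℝ) + 1) *
          (((⌊(2 * J + lam - h) / (2 * h)⌋ : ℝ) + 1) - 1)) +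
        (lam - h) * (((⌊(2 * J + lam - h) / (2 * h)⌋ : ℝ) + 1) *
            (((⌊(2 * J + lam - h) / (2 * h)⌋ : ℝ) + 1) - 1) +
          2 * ((⌊(2 * J + lam - h) / (2 * h)⌋ : ℝ) + 1) - 1) +
        4 * J - (lam + h) :=
  Vstar_lt_lower_bound_general J lam h hlam hh1 hh2 hni1 hcond
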